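/- Let a ∈ (−1,1) and let u ∈ C²(ℝ³×(0,∞)) with |∇_ℍu| ∈ L^∞(closure(B_R⁺)) and ∫_{B_R⁺} y^a(|∇⁺u|² + |∇⁺(Xu)|² + |∇⁺(Yu)|²) < ∞ for every R > 0. Then for every φ ∈ C_0^∞(ℝ⁴): ∫_{𝓡⁺} y^a(∂_y(|∇_ℍu|·φ))² − ∫_{ℝ³×(0,∞)} y^a(∂_y(Xu)·∂_y(Xu·φ²) + ∂_y(Yu)·∂_y(Yu·φ²)) ≤ ∫_{ℝ³×(0,∞)} y^a|∇_ℍu|²(∂_yφ)², where 𝓡⁺ := {(x,y) ∈ ℝ³×(0,∞) : ∇_ℍu(x,y) ≠ 0}. -/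

import Mathlib

noncomputable section
open MeasureTheory Real Filter Set

/-- Points of the half-space `ℝ³ × ℝ` (the last coordinate is `y`). -/
abbrev Pt : Type := (Fin 3 → ℝ) × ℝ

/-- Partial derivative in the i-th horizontal direction. -/
def pdx (i : Fin 3) (u : Pt → ℝ) (p : Pt) : ℝ := fderiv ℝ u p (Pi.single i 1, 0)

/-- Partial derivative in the `y` direction. -/
def pdy (u : Pt → ℝ) (p : Pt) : ℝ := fderiv ℝ u p (0, 1)

/-- Heisenberg vector field `X = ∂₁ + 2x₂∂₃`. -/
def Xd (u : Pt → ℝ) (p : Pt) : ℝ := pdx 0 u p + 2 * p.1 1 * pdx 2 u p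

/-- Heisenberg vector field `Y = ∂₂ − 2x₁∂₃`. -/
def Yd (u : Pt → ℝ) (p : Pt) : ℝ := pdx 1 u p - 2 * p.1 0 * pdx 2 u p

/-- Heisenberg vector field `T = −4∂₃`. -/
def Td (u : Pt → ℝ) (p : Pt) : ℝ := -4 * pdx 2 u p

/-- `|∇_ℍ u|²`. -/
def normH2 (u : Pt → ℝ) (p : Pt) : ℝ := (Xd u p) ^ 2 + (Yd u p) ^ 2

/-- `|∇_ℍ u|`. -/
def nH (u : Pt → ℝ) (p : Pt) : ℝ := Real.sqrt (normH2 u p)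

/-- `|∇⁺ u|² = (Xu)² + (Yu)² + (∂_y u)²`. -/
def gradSq (u : Pt → ℝ) (p : Pt) : ℝ := (Xd u p) ^ 2 + (Yd u p) ^ 2 + (pdy u p) ^ 2

/-- `⟨∇⁺u, ∇⁺w⟩`. -/
def gradInner (u w : Pt → ℝ) (p : Pt) : ℝ :=
  Xd u p * Xd w p + Yd u p * Yd w p + pdy u p * pdy w p

/-- The open upper half-space `ℝ³ × (0,∞)`. -/
def Hplus : Set Pt := {p | 0 < p.2}

/-- Euclidean ball of radius `R` (centered at the origin) in `ℝ⁴ ≃ Pt`. -/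
def eBall (R : ℝ) : Set Pt := {p | (p.1 0) ^ 2 + (p.1 1) ^ 2 + (p.1 2) ^ 2 + p.2 ^ 2 < R ^ 2}

/-- Admissible test function: bounded, locally Lipschitz on `ℝ³×[0,∞)`, vanishing
outside some ball, with finite weighted energy. -/
def IsAdmissible (a : ℝ) (ξ : Pt → ℝ) : Prop :=
  (∃ M, ∀ p : Pt, 0 ≤ p.2 → |ξ p| ≤ M) ∧
  (∀ p : Pt, 0 ≤ p.2 → ∃ K : NNReal, ∃ t ∈ nhdsWithin p {q : Pt | 0 ≤ q.2},
    LipschitzOnWith K ξ t) ∧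
  (∃ R > 0, (∀ p : Pt, 0 ≤ p.2 → p ∉ eBall R → ξ p = 0) ∧
    IntegrableOn (fun p => p.2 ^ a * gradSq ξ p) (eBall R ∩ Hplus) volume)

/-- Bounded weak solution of `div(y^a ∇⁺u)=0` in `ℝ³×(0,∞)`, `−y^a u_y = f(u)` on `ℝ³×{0}`. -/
def IsWeakSolution (a : ℝ) (f : ℝ → ℝ) (u : Pt → ℝ) : Prop :=
  (∃ M, ∀ p : Pt, 0 ≤ p.2 → |u p| ≤ M) ∧
  ContinuousOn u {p : Pt | 0 ≤ p.2} ∧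
  (∀ R > 0, IntegrableOn (fun p => p.2 ^ a * gradSq u p) (eBall R ∩ Hplus) volume) ∧
  (∀ ξ : Pt → ℝ, IsAdmissible a ξ →
    (∫ p in Hplus, p.2 ^ a * gradInner u ξ p)
      = ∫ x : Fin 3 → ℝ, f (u (x, 0)) * ξ (x, 0))

/-- Stability: nonnegativity of the second variation. -/
def IsStable (a : ℝ) (f : ℝ → ℝ) (u : Pt → ℝ) : Prop :=
  ∀ ξ : Pt → ℝ, IsAdmissible a ξ →
    0 ≤ (∫ p in Hplus, p.2 ^ a * gradSq ξ p)
        - ∫ x : Fin 3 → ℝ, deriv f (u (x, 0)) * ξ (x, 0) ^ 2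

/-- `f ∈ C^{1,γ}(ℝ)`. -/
def C1Holder (γ : ℝ) (f : ℝ → ℝ) : Prop :=
  Differentiable ℝ f ∧ ∃ C > 0, ∀ s t : ℝ, |deriv f s - deriv f t| ≤ C * |s - t| ^ γ

/-- `|∇_ℍ u| ∈ L^∞(closure(B_R⁺))` for every `R > 0`. -/
def GradBound (u : Pt → ℝ) : Prop :=
  ∀ R > 0, ∃ M, ∀ p ∈ closure (eBall R ∩ Hplus), nH u p ≤ M

/-- First component of the intrinsic normal `ν = ∇_ℍu/|∇_ℍu|`. -/
def nu1 (u : Pt → ℝ) (p : Pt) : ℝ := Xd u p / nH u p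

/-- Second component of the intrinsic normal. -/
def nu2 (u : Pt → ℝ) (p : Pt) : ℝ := Yd u p / nH u p

/-- First component of the intrinsic unit tangent `v = (Yu,−Xu)/|∇_ℍu|`. -/
def tv1 (u : Pt → ℝ) (p : Pt) : ℝ := Yd u p / nH u p

/-- Second component of the intrinsic unit tangent. -/
def tv2 (u : Pt → ℝ) (p : Pt) : ℝ := -(Xd u p) / nH u p

/-- `|Hu|²`, the squared norm of the horizontal Hessian
`Hu = [[XXu, YXu],[XYu, YYu]]`. -/
def normHess2 (u : Pt → ℝ) (p : Pt) : ℝ :=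
  (Xd (Xd u) p) ^ 2 + (Yd (Xd u) p) ^ 2 + (Xd (Yd u) p) ^ 2 + (Yd (Yd u) p) ^ 2

/-- `⟨(Hu)²ν,ν⟩ = |Huᵀν|²`, where `(Hu)² = Hu(Hu)ᵀ`. -/
def hessQ (u : Pt → ℝ) (p : Pt) : ℝ :=
  (Xd (Xd u) p * nu1 u p + Xd (Yd u) p * nu2 u p) ^ 2
  + (Yd (Xd u) p * nu1 u p + Yd (Yd u) p * nu2 u p) ^ 2

/-- `⟨Hu v, ν⟩`. -/
def huvnu (u : Pt → ℝ) (p : Pt) : ℝ :=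
  (Xd (Xd u) p * tv1 u p + Yd (Xd u) p * tv2 u p) * nu1 u p
  + (Xd (Yd u) p * tv1 u p + Yd (Yd u) p * tv2 u p) * nu2 u p

/-- Intrinsic mean curvature `h = X(Xu/|∇_ℍu|) + Y(Yu/|∇_ℍu|)`. -/
def curvh (u : Pt → ℝ) (p : Pt) : ℝ :=
  Xd (fun q => Xd u q / nH u q) p + Yd (fun q => Yd u q / nH u q) p

/-- Imaginary curvature `p = −Tu/|∇_ℍu|`. -/
def curvp (u : Pt → ℝ) (p : Pt) : ℝ := - Td u p / nH u p

/-- `⟨Tν, v⟩ = T(ν₁)v₁ + T(ν₂)v₂`. -/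
def tnuv (u : Pt → ℝ) (p : Pt) : ℝ :=
  Td (fun q => nu1 u q) p * tv1 u p + Td (fun q => nu2 u q) p * tv2 u p

/-- `𝓡⁺ = {(x,y) ∈ ℝ³×(0,∞) : ∇_ℍu(x,y) ≠ 0}`. -/
def Rplus (u : Pt → ℝ) : Set Pt := {p | 0 < p.2 ∧ normH2 u p ≠ 0}

/-- The Heisenberg gauge norm `|x|_ℍ = ((x₁²+x₂²)² + x₃²)^{1/4}` on `ℝ³`. -/
def hnorm (x : Fin 3 → ℝ) : ℝ := (((x 0) ^ 2 + (x 1) ^ 2) ^ 2 + (x 2) ^ 2) ^ ((1 : ℝ) / 4)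

/-- The gauge norm `|Z| = (|x|_ℍ² + y²)^{1/2}` on `ℝ³×(0,∞)`. -/
def gnorm (p : Pt) : ℝ := Real.sqrt ((hnorm p.1) ^ 2 + p.2 ^ 2)

/-- Gauge ball `B(0,τ)` in the upper half-space. -/
def gBall (τ : ℝ) : Set Pt := {p | 0 < p.2 ∧ gnorm p < τ}

/-- Gauge semi-annulus `A_{r,R}`. -/
def gAnn (r R : ℝ) : Set Pt := {p | 0 < p.2 ∧ r ≤ gnorm p ∧ gnorm p ≤ R}

/-- The weighted energy `η(τ)`. -/
def eta (a : ℝ) (u : Pt → ℝ) (τ : ℝ) : ℝ :=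
  ∫ p in gBall τ, 4 * p.2 ^ a * normH2 u p * ((p.1 0) ^ 2 + (p.1 1) ^ 2 + p.2 ^ 2)

section VTE_Aux

open MeasureTheory Real Filter Set

lemma VTE.isOpen_Hplus : IsOpen Hplus := isOpen_lt continuous_const continuous_snd

lemma VTE.contDiffOn_fderiv (u : Pt → ℝ) (hC2 : ContDiffOn ℝ 2 u Hplus) :
    ContDiffOn ℝ 1 (fderiv ℝ u) Hplus :=
  hC2.fderiv_of_isOpen VTE.isOpen_Hplus (by norm_num)

lemma VTE.contDiffOn_Xd (u : Pt → ℝ) (hC2 : ContDiffOn ℝ 2 u Hplus) :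
    ContDiffOn ℝ 1 (Xd u) Hplus := by
  have hF := VTE.contDiffOn_fderiv u hC2
  unfold Xd pdx
  exact (hF.clm_apply contDiffOn_const).add
    ((contDiffOn_const.mul (((ContinuousLinearMap.proj (R := ℝ)
        (φ := fun _ : Fin 3 => ℝ) 1).contDiff.comp contDiff_fst).contDiffOn)).mul
      (hF.clm_apply contDiffOn_const))

lemma VTE.contDiffOn_Yd (u : Pt → ℝ) (hC2 : ContDiffOn ℝ 2 u Hplus) :
    ContDiffOn ℝ 1 (Yd u) Hplus := by
  have hF := VTE.contDiffOn_fderiv u hC2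
  unfold Yd pdx
  exact (hF.clm_apply contDiffOn_const).sub
    ((contDiffOn_const.mul (((ContinuousLinearMap.proj (R := ℝ)
        (φ := fun _ : Fin 3 => ℝ) 0).contDiff.comp contDiff_fst).contDiffOn)).mul
      (hF.clm_apply contDiffOn_const))

lemma VTE.diff_Xd (u : Pt → ℝ) (hC2 : ContDiffOn ℝ 2 u Hplus) {p : Pt} (hp : p ∈ Hplus) :
    DifferentiableAt ℝ (Xd u) p :=
  (((VTE.contDiffOn_Xd u hC2).differentiableOn one_ne_zero) p hp).differentiableAt
    (VTE.isOpen_Hplus.mem_nhds hp)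

lemma VTE.diff_Yd (u : Pt → ℝ) (hC2 : ContDiffOn ℝ 2 u Hplus) {p : Pt} (hp : p ∈ Hplus) :
    DifferentiableAt ℝ (Yd u) p :=
  (((VTE.contDiffOn_Yd u hC2).differentiableOn one_ne_zero) p hp).differentiableAt
    (VTE.isOpen_Hplus.mem_nhds hp)

lemma VTE.contOn_pdy_Xd (u : Pt → ℝ) (hC2 : ContDiffOn ℝ 2 u Hplus) :
    ContinuousOn (pdy (Xd u)) Hplus :=
  ((VTE.contDiffOn_Xd u hC2).continuousOn_fderiv_of_isOpen VTE.isOpen_Hplus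
    le_rfl).clm_apply continuousOn_const

lemma VTE.contOn_pdy_Yd (u : Pt → ℝ) (hC2 : ContDiffOn ℝ 2 u Hplus) :
    ContinuousOn (pdy (Yd u)) Hplus :=
  ((VTE.contDiffOn_Yd u hC2).continuousOn_fderiv_of_isOpen VTE.isOpen_Hplus
    le_rfl).clm_apply continuousOn_const

lemma VTE.pdy_mul {f g : Pt → ℝ} {p : Pt} (hf : DifferentiableAt ℝ f p)
    (hg : DifferentiableAt ℝ g p) :
    pdy (fun q => f q * g q) p = f p * pdy g p + g p * pdy f p := by
  unfold pdy; rw [fderiv_fun_mul hf hg]; simp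

lemma VTE.pdy_normH2 (u : Pt → ℝ) {p : Pt} (hX : DifferentiableAt ℝ (Xd u) p)
    (hY : DifferentiableAt ℝ (Yd u) p) :
    pdy (normH2 u) p = 2 * Xd u p * pdy (Xd u) p + 2 * Yd u p * pdy (Yd u) p := by
  have h1 : (normH2 u) = fun q => Xd u q * Xd u q + Yd u q * Yd u q := by
    funext q; unfold normH2; ring
  rw [h1]
  unfold pdy
  rw [fderiv_fun_add (f := fun q => Xd u q * Xd u q) (g := fun q => Yd u q * Yd u q) ((hX.mul hX)) ((hY.mul hY)), fderiv_fun_mul hX hX, fderiv_fun_mul hY hY]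
  simp [pdy]
  ring

lemma VTE.pdy_nH (u : Pt → ℝ) {p : Pt} (hX : DifferentiableAt ℝ (Xd u) p)
    (hY : DifferentiableAt ℝ (Yd u) p) (hne : normH2 u p ≠ 0) :
    pdy (nH u) p = (Xd u p * pdy (Xd u) p + Yd u p * pdy (Yd u) p) / nH u p
      ∧ DifferentiableAt ℝ (nH u) p := by
  have hN : DifferentiableAt ℝ (normH2 u) p := by
    unfold normH2; exact (hX.pow 2).add (hY.pow 2)
  have h : HasFDerivAt (fun q => Real.sqrt (normH2 u q))
      ((1 / (2 * Real.sqrt (normH2 u p))) • fderiv ℝ (normH2 u) p) p :=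
    hN.hasFDerivAt.sqrt hne
  have hnH : nH u = fun q => Real.sqrt (normH2 u q) := rfl
  constructor
  · rw [hnH]
    unfold pdy
    rw [h.fderiv]
    have := VTE.pdy_normH2 u hX hY
    unfold pdy at this
    simp only [ContinuousLinearMap.coe_smul', Pi.smul_apply, smul_eq_mul, this]
    have hpos : 0 < normH2 u p :=
      lt_of_le_of_ne (by unfold normH2; positivity) (Ne.symm hne)
    have hs : Real.sqrt (normH2 u p) ≠ 0 := ne_of_gt (Real.sqrt_pos.2 hpos)
    field_simp
  · rw [hnH]; exact h.differentiableAt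

end VTE_Aux


set_option maxHeartbeats 1600000 in
/-- Estimate on the vertical terms in the proof of Theorem 6. -/
theorem vertical_terms_estimate
    (a : ℝ) (ha : a ∈ Set.Ioo (-1 : ℝ) 1)
    (u : Pt → ℝ) (hC2 : ContDiffOn ℝ 2 u Hplus) (hgb : GradBound u)
    (hint : ∀ R > 0, IntegrableOn
      (fun p => p.2 ^ a * (gradSq u p + gradSq (Xd u) p + gradSq (Yd u) p))
      (eBall R ∩ Hplus) volume)
    (φ : Pt → ℝ) (hφs : ContDiff ℝ (⊤ : ℕ∞) φ) (hφc : HasCompactSupport φ) :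
    (∫ p in Rplus u, p.2 ^ a * (pdy (fun q => nH u q * φ q) p) ^ 2)
      - (∫ p in Hplus, p.2 ^ a *
          (pdy (Xd u) p * pdy (fun q => Xd u q * φ q ^ 2) p
            + pdy (Yd u) p * pdy (fun q => Yd u q * φ q ^ 2) p))
      ≤ ∫ p in Hplus, p.2 ^ a * normH2 u p * (pdy φ p) ^ 2 := by
  have hHm : MeasurableSet Hplus := VTE.isOpen_Hplus.measurableSet
  have hφd : Differentiable ℝ φ := hφs.differentiable (by simp)
  have hXc : ContinuousOn (Xd u) Hplus := (VTE.contDiffOn_Xd u hC2).continuousOn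
  have hYc : ContinuousOn (Yd u) Hplus := (VTE.contDiffOn_Yd u hC2).continuousOn
  have hXpc : ContinuousOn (pdy (Xd u)) Hplus := VTE.contOn_pdy_Xd u hC2
  have hYpc : ContinuousOn (pdy (Yd u)) Hplus := VTE.contOn_pdy_Yd u hC2
  have hya : ContinuousOn (fun p : Pt => p.2 ^ a) Hplus := by
    intro p hp
    exact ((Real.continuousAt_rpow_const p.2 a
      (Or.inl (ne_of_gt hp))).comp continuous_snd.continuousAt).continuousWithinAt
  have hya0 : ∀ p : Pt, p ∈ Hplus → (0:ℝ) ≤ p.2 ^ a := fun p hp => Real.rpow_nonneg hp.le a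
  have hpdyφc : Continuous (pdy φ) :=
    ((hφs.fderiv_right (m := (⊤ : ℕ∞)) (by simp)).continuous).clm_apply continuous_const
  -- bounds for φ and pdy φ
  obtain ⟨M1, hM1⟩ := hφc.exists_bound_of_continuousOn hφs.continuous.continuousOn
  set Kφ : ℝ := max M1 0 with hKφdef
  have hKφ0 : 0 ≤ Kφ := le_max_right _ _
  have hKφ : ∀ p, |φ p| ≤ Kφ := by
    intro p
    by_cases h : p ∈ tsupport φ
    · exact le_max_of_le_left (by simpa [Real.norm_eq_abs] using hM1 p h)
    · simp [image_eq_zero_of_notMem_tsupport h, hKφ0]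
  have hdφcs : HasCompactSupport (pdy φ) := hφc.fderiv_apply ℝ ((0 : Fin 3 → ℝ), (1:ℝ))
  obtain ⟨M2, hM2⟩ := hdφcs.exists_bound_of_continuousOn hpdyφc.continuousOn
  set Kdφ : ℝ := max M2 0 with hKdφdef
  have hKdφ0 : 0 ≤ Kdφ := le_max_right _ _
  have hKdφ : ∀ p, |pdy φ p| ≤ Kdφ := by
    intro p
    by_cases h : p ∈ tsupport (pdy φ)
    · exact le_max_of_le_left (by simpa [Real.norm_eq_abs] using hM2 p h)
    · simp [image_eq_zero_of_notMem_tsupport h, hKdφ0]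
  -- choice of ball containing the support
  have hgcont : Continuous (fun p : Pt =>
      (p.1 0) ^ 2 + (p.1 1) ^ 2 + (p.1 2) ^ 2 + p.2 ^ 2) := by fun_prop
  obtain ⟨Mg, hMg⟩ := hφc.exists_bound_of_continuousOn hgcont.continuousOn
  set R : ℝ := Real.sqrt (max Mg 0 + 1) with hRdef
  have hRpos : 0 < R := Real.sqrt_pos.2 (by positivity)
  have hR2 : R ^ 2 = max Mg 0 + 1 := Real.sq_sqrt (by positivity)
  have hsub : tsupport φ ⊆ eBall R := by
    intro p hp
    have h1 := hMg p hp
    have h2 : (p.1 0) ^ 2 + (p.1 1) ^ 2 + (p.1 2) ^ 2 + p.2 ^ 2 ≤ max Mg 0 :=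
      le_max_of_le_left ((le_abs_self _).trans (by simpa [Real.norm_eq_abs] using h1))
    show (p.1 0) ^ 2 + (p.1 1) ^ 2 + (p.1 2) ^ 2 + p.2 ^ 2 < R ^ 2
    rw [hR2]; linarith
  have hφ0 : ∀ p, p ∉ eBall R → φ p = 0 := fun p hp =>
    image_eq_zero_of_notMem_tsupport (fun h => hp (hsub h))
  have hdφ0 : ∀ p, p ∉ eBall R → pdy φ p = 0 := by
    intro p hp
    have h := fderiv_of_notMem_tsupport (𝕜 := ℝ) (f := φ) (fun h => hp (hsub h))
    unfold pdy
    rw [h]; rfl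
  have hBallm : MeasurableSet (eBall R) := by
    have : IsOpen (eBall R) := isOpen_lt hgcont continuous_const
    exact this.measurableSet
  -- the dominating function
  have hK0 : (0:ℝ) < 2 * Kφ ^ 2 + Kdφ ^ 2 + 1 := by positivity
  set D : Pt → ℝ := (eBall R).indicator (fun p =>
    (2 * Kφ ^ 2 + Kdφ ^ 2 + 1) * (p.2 ^ a * (gradSq u p + gradSq (Xd u) p + gradSq (Yd u) p))) with hDdef
  have hDint : Integrable D (volume.restrict Hplus) := by
    rw [hDdef, integrable_indicator_iff hBallm]
    rw [IntegrableOn, Measure.restrict_restrict hBallm]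
    exact ((hint R hRpos).const_mul _)
  -- elementary pointwise bounds
  have hg1 : ∀ p : Pt, normH2 u p ≤ gradSq u p := by
    intro p; unfold normH2 gradSq; nlinarith [sq_nonneg (pdy u p)]
  have hg1' : ∀ p : Pt, 0 ≤ gradSq u p := by intro p; unfold gradSq; positivity
  have hg2 : ∀ p : Pt, pdy (Xd u) p ^ 2 ≤ gradSq (Xd u) p := by
    intro p; unfold gradSq
    nlinarith [sq_nonneg (Xd (Xd u) p), sq_nonneg (Yd (Xd u) p)]
  have hg2' : ∀ p : Pt, 0 ≤ gradSq (Xd u) p := by intro p; unfold gradSq; positivity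
  have hg3 : ∀ p : Pt, pdy (Yd u) p ^ 2 ≤ gradSq (Yd u) p := by
    intro p; unfold gradSq
    nlinarith [sq_nonneg (Xd (Yd u) p), sq_nonneg (Yd (Yd u) p)]
  have hg3' : ∀ p : Pt, 0 ≤ gradSq (Yd u) p := by intro p; unfold gradSq; positivity
  have hnn0 : ∀ p : Pt, 0 ≤ normH2 u p := by intro p; unfold normH2; positivity
  have hφsq : ∀ p : Pt, φ p ^ 2 ≤ Kφ ^ 2 := by
    intro p; nlinarith [hKφ p, abs_nonneg (φ p), sq_abs (φ p)]
  have hdφsq : ∀ p : Pt, pdy φ p ^ 2 ≤ Kdφ ^ 2 := by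
    intro p; nlinarith [hKdφ p, abs_nonneg (pdy φ p), sq_abs (pdy φ p)]
  -- integrability of the C integrand
  have hC_int : IntegrableOn (fun p : Pt => p.2 ^ a * normH2 u p * (pdy φ p) ^ 2)
      Hplus volume := by
    have hCcont : ContinuousOn (fun p : Pt => p.2 ^ a * normH2 u p * (pdy φ p) ^ 2)
        Hplus := by
      refine (hya.mul ?_).mul (hpdyφc.pow 2).continuousOn
      unfold normH2
      exact (hXc.pow 2).add (hYc.pow 2)
    refine Integrable.mono' hDint (hCcont.aestronglyMeasurable hHm) ?_
    refine (ae_restrict_iff' hHm).2 (Filter.Eventually.of_forall ?_)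
    intro p hp
    by_cases hb : p ∈ eBall R
    · rw [hDdef, Set.indicator_of_mem hb, Real.norm_eq_abs]
      have h0 := hya0 p hp
      rw [abs_of_nonneg (mul_nonneg (mul_nonneg h0 (hnn0 p)) (sq_nonneg _))]
      have s1 : p.2 ^ a * normH2 u p * (pdy φ p) ^ 2
          ≤ p.2 ^ a * gradSq u p * Kdφ ^ 2 := by
        calc p.2 ^ a * normH2 u p * (pdy φ p) ^ 2
            ≤ p.2 ^ a * gradSq u p * (pdy φ p) ^ 2 :=
              mul_le_mul_of_nonneg_right (mul_le_mul_of_nonneg_left (hg1 p) h0)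
                (sq_nonneg _)
          _ ≤ p.2 ^ a * gradSq u p * Kdφ ^ 2 :=
              mul_le_mul_of_nonneg_left (hdφsq p) (mul_nonneg h0 (hg1' p))
      nlinarith [mul_nonneg (mul_nonneg h0 (hg1' p)) (sq_nonneg Kφ),
        mul_nonneg (mul_nonneg h0 (hg2' p)) (sq_nonneg Kφ),
        mul_nonneg (mul_nonneg h0 (hg3' p)) (sq_nonneg Kφ),
        mul_nonneg (mul_nonneg h0 (hg2' p)) (sq_nonneg Kdφ),
        mul_nonneg (mul_nonneg h0 (hg3' p)) (sq_nonneg Kdφ),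
        mul_nonneg h0 (hg1' p), mul_nonneg h0 (hg2' p), mul_nonneg h0 (hg3' p)]
    · rw [hdφ0 p hb, hDdef, Set.indicator_of_notMem hb]
      simp
  -- the expanded B integrand and its integrability
  have hB_int : IntegrableOn (fun p : Pt => p.2 ^ a *
      ((pdy (Xd u) p ^ 2 + pdy (Yd u) p ^ 2) * φ p ^ 2
        + 2 * (Xd u p * pdy (Xd u) p + Yd u p * pdy (Yd u) p) * φ p * pdy φ p))
      Hplus volume := by
    have hBcont : ContinuousOn (fun p : Pt => p.2 ^ a *
        ((pdy (Xd u) p ^ 2 + pdy (Yd u) p ^ 2) * φ p ^ 2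
          + 2 * (Xd u p * pdy (Xd u) p + Yd u p * pdy (Yd u) p) * φ p * pdy φ p))
        Hplus := by
      refine hya.mul (ContinuousOn.add ?_ ?_)
      · exact ((hXpc.pow 2).add (hYpc.pow 2)).mul (hφs.continuous.pow 2).continuousOn
      · exact ((continuousOn_const.mul ((hXc.mul hXpc).add (hYc.mul hYpc))).mul
          hφs.continuous.continuousOn).mul hpdyφc.continuousOn
    refine Integrable.mono' hDint (hBcont.aestronglyMeasurable hHm) ?_
    refine (ae_restrict_iff' hHm).2 (Filter.Eventually.of_forall ?_)
    intro p hp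
    by_cases hb : p ∈ eBall R
    · rw [hDdef, Set.indicator_of_mem hb, Real.norm_eq_abs]
      have h0 := hya0 p hp
      have m1 : pdy (Xd u) p ^ 2 * φ p ^ 2 ≤ gradSq (Xd u) p * Kφ ^ 2 :=
        mul_le_mul (hg2 p) (hφsq p) (sq_nonneg _) (hg2' p)
      have m2 : pdy (Yd u) p ^ 2 * φ p ^ 2 ≤ gradSq (Yd u) p * Kφ ^ 2 :=
        mul_le_mul (hg3 p) (hφsq p) (sq_nonneg _) (hg3' p)
      have m3 : (Xd u p ^ 2 + Yd u p ^ 2) * pdy φ p ^ 2 ≤ gradSq u p * Kdφ ^ 2 := by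
        refine mul_le_mul ?_ (hdφsq p) (sq_nonneg _) (hg1' p)
        have := hg1 p; unfold normH2 at this; linarith
      have h9 : 2 * (pdy (Xd u) p ^ 2 + pdy (Yd u) p ^ 2) * φ p ^ 2
          + (Xd u p ^ 2 + Yd u p ^ 2) * (pdy φ p) ^ 2
          ≤ (2 * Kφ ^ 2 + Kdφ ^ 2 + 1) * (gradSq u p + gradSq (Xd u) p + gradSq (Yd u) p) := by
        nlinarith [m1, m2, m3, mul_nonneg (hg1' p) (sq_nonneg Kφ),
          mul_nonneg (hg2' p) (sq_nonneg Kdφ), mul_nonneg (hg3' p) (sq_nonneg Kdφ),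
          hg1' p, hg2' p, hg3' p]
      have habs : |(pdy (Xd u) p ^ 2 + pdy (Yd u) p ^ 2) * φ p ^ 2
          + 2 * (Xd u p * pdy (Xd u) p + Yd u p * pdy (Yd u) p) * φ p * pdy φ p|
          ≤ (2 * Kφ ^ 2 + Kdφ ^ 2 + 1) * (gradSq u p + gradSq (Xd u) p + gradSq (Yd u) p) := by
        rw [abs_le]
        constructor
        · nlinarith [sq_nonneg (Xd u p * pdy φ p + pdy (Xd u) p * φ p),
            sq_nonneg (Yd u p * pdy φ p + pdy (Yd u) p * φ p), h9]
        · nlinarith [sq_nonneg (Xd u p * pdy φ p - pdy (Xd u) p * φ p),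
            sq_nonneg (Yd u p * pdy φ p - pdy (Yd u) p * φ p), h9]
      calc |p.2 ^ a * ((pdy (Xd u) p ^ 2 + pdy (Yd u) p ^ 2) * φ p ^ 2
          + 2 * (Xd u p * pdy (Xd u) p + Yd u p * pdy (Yd u) p) * φ p * pdy φ p)|
          = p.2 ^ a * |(pdy (Xd u) p ^ 2 + pdy (Yd u) p ^ 2) * φ p ^ 2
          + 2 * (Xd u p * pdy (Xd u) p + Yd u p * pdy (Yd u) p) * φ p * pdy φ p| := by
            rw [abs_mul, abs_of_nonneg h0]
        _ ≤ p.2 ^ a * ((2 * Kφ ^ 2 + Kdφ ^ 2 + 1) * (gradSq u p + gradSq (Xd u) p + gradSq (Yd u) p)) :=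
            mul_le_mul_of_nonneg_left habs h0
        _ = (2 * Kφ ^ 2 + Kdφ ^ 2 + 1) * (p.2 ^ a * (gradSq u p + gradSq (Xd u) p + gradSq (Yd u) p)) := by ring
    · rw [hφ0 p hb, hdφ0 p hb, hDdef, Set.indicator_of_notMem hb]
      simp
  -- pointwise identity for the B integrand
  have hBeq : ∀ p ∈ Hplus, p.2 ^ a *
      (pdy (Xd u) p * pdy (fun q => Xd u q * φ q ^ 2) p
        + pdy (Yd u) p * pdy (fun q => Yd u q * φ q ^ 2) p)
      = p.2 ^ a * ((pdy (Xd u) p ^ 2 + pdy (Yd u) p ^ 2) * φ p ^ 2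
        + 2 * (Xd u p * pdy (Xd u) p + Yd u p * pdy (Yd u) p) * φ p * pdy φ p) := by
    intro p hp
    have hX := VTE.diff_Xd u hC2 hp
    have hY := VTE.diff_Yd u hC2 hp
    have hsq : DifferentiableAt ℝ (fun q : Pt => φ q * φ q) p := (hφd p).mul (hφd p)
    have e1 : pdy (fun q => Xd u q * φ q ^ 2) p
        = pdy (Xd u) p * φ p ^ 2 + Xd u p * (2 * φ p * pdy φ p) := by
      have hre : (fun q => Xd u q * φ q ^ 2) = fun q => Xd u q * (φ q * φ q) := by
        funext q; ring
      rw [hre, VTE.pdy_mul hX hsq, VTE.pdy_mul (hφd p) (hφd p)]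
      ring
    have e2 : pdy (fun q => Yd u q * φ q ^ 2) p
        = pdy (Yd u) p * φ p ^ 2 + Yd u p * (2 * φ p * pdy φ p) := by
      have hre : (fun q => Yd u q * φ q ^ 2) = fun q => Yd u q * (φ q * φ q) := by
        funext q; ring
      rw [hre, VTE.pdy_mul hY hsq, VTE.pdy_mul (hφd p) (hφd p)]
      ring
    rw [e1, e2]; ring
  -- the key pointwise inequality on Rplus
  have hAle : ∀ p ∈ Rplus u, p.2 ^ a * (pdy (fun q => nH u q * φ q) p) ^ 2
      ≤ p.2 ^ a * normH2 u p * (pdy φ p) ^ 2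
        + p.2 ^ a * ((pdy (Xd u) p ^ 2 + pdy (Yd u) p ^ 2) * φ p ^ 2
          + 2 * (Xd u p * pdy (Xd u) p + Yd u p * pdy (Yd u) p) * φ p * pdy φ p) := by
    intro p hp
    obtain ⟨hp1, hne⟩ := hp
    have hp' : p ∈ Hplus := hp1
    have hX := VTE.diff_Xd u hC2 hp'
    have hY := VTE.diff_Yd u hC2 hp'
    obtain ⟨hdn, hnHd⟩ := VTE.pdy_nH u hX hY hne
    have e2 : pdy (fun q => nH u q * φ q) p
        = nH u p * pdy φ p + φ p * pdy (nH u) p := VTE.pdy_mul hnHd (hφd p)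
    have h0 := hya0 p hp'
    have hpos : 0 < normH2 u p := lt_of_le_of_ne (hnn0 p) (Ne.symm hne)
    have npos : 0 < nH u p := by unfold nH; exact Real.sqrt_pos.2 hpos
    have hn2 : nH u p ^ 2 = normH2 u p := by unfold nH; exact Real.sq_sqrt (hnn0 p)
    have hn2' : nH u p ^ 2 = Xd u p ^ 2 + Yd u p ^ 2 := by rw [hn2]; rfl
    set S : ℝ := Xd u p * pdy (Xd u) p + Yd u p * pdy (Yd u) p with hSdef
    have hcs : S ^ 2 ≤ (pdy (Xd u) p ^ 2 + pdy (Yd u) p ^ 2) * (Xd u p ^ 2 + Yd u p ^ 2) := by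
      rw [hSdef]
      nlinarith [sq_nonneg (Xd u p * pdy (Yd u) p - Yd u p * pdy (Xd u) p)]
    have h6 : (S / nH u p) ^ 2 ≤ pdy (Xd u) p ^ 2 + pdy (Yd u) p ^ 2 := by
      rw [div_pow, div_le_iff₀ (by positivity)]
      calc S ^ 2 ≤ (pdy (Xd u) p ^ 2 + pdy (Yd u) p ^ 2) * (Xd u p ^ 2 + Yd u p ^ 2) := hcs
        _ = (pdy (Xd u) p ^ 2 + pdy (Yd u) p ^ 2) * nH u p ^ 2 := by rw [hn2']
    have hexp : (nH u p * pdy φ p + φ p * (S / nH u p)) ^ 2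
        = (Xd u p ^ 2 + Yd u p ^ 2) * (pdy φ p) ^ 2 + 2 * S * (φ p * pdy φ p)
          + φ p ^ 2 * (S / nH u p) ^ 2 := by
      rw [← hn2']
      field_simp
      ring
    have core : (nH u p * pdy φ p + φ p * (S / nH u p)) ^ 2
        ≤ (Xd u p ^ 2 + Yd u p ^ 2) * (pdy φ p) ^ 2
          + ((pdy (Xd u) p ^ 2 + pdy (Yd u) p ^ 2) * φ p ^ 2
            + 2 * S * φ p * pdy φ p) := by
      rw [hexp]
      nlinarith [mul_le_mul_of_nonneg_left h6 (sq_nonneg (φ p))]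
    rw [e2, hdn]
    have hfin := mul_le_mul_of_nonneg_left core h0
    have hnn : normH2 u p = Xd u p ^ 2 + Yd u p ^ 2 := rfl
    rw [hnn]
    nlinarith [hfin]
  -- nonnegativity of C + B on Hplus
  have hGpos : ∀ p ∈ Hplus, 0 ≤ p.2 ^ a * normH2 u p * (pdy φ p) ^ 2
      + p.2 ^ a * ((pdy (Xd u) p ^ 2 + pdy (Yd u) p ^ 2) * φ p ^ 2
        + 2 * (Xd u p * pdy (Xd u) p + Yd u p * pdy (Yd u) p) * φ p * pdy φ p) := by
    intro p hp
    have h0 := hya0 p hp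
    by_cases hne : normH2 u p = 0
    · have h' : Xd u p ^ 2 + Yd u p ^ 2 = 0 := hne
      have hX0 : Xd u p = 0 := by
        have : Xd u p ^ 2 = 0 := by nlinarith [sq_nonneg (Xd u p), sq_nonneg (Yd u p)]
        exact pow_eq_zero_iff (by norm_num : (2:ℕ) ≠ 0) |>.mp this
      have hY0 : Yd u p = 0 := by
        have : Yd u p ^ 2 = 0 := by nlinarith [sq_nonneg (Xd u p), sq_nonneg (Yd u p)]
        exact pow_eq_zero_iff (by norm_num : (2:ℕ) ≠ 0) |>.mp this
      rw [hne, hX0, hY0]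
      have : (0:ℝ) ≤ p.2 ^ a * ((pdy (Xd u) p ^ 2 + pdy (Yd u) p ^ 2) * φ p ^ 2) := by
        have := sq_nonneg (φ p); positivity
      nlinarith [this]
    · have hmem : p ∈ Rplus u := ⟨hp, hne⟩
      have h1 := hAle p hmem
      have h2 : 0 ≤ p.2 ^ a * (pdy (fun q => nH u q * φ q) p) ^ 2 :=
        mul_nonneg h0 (sq_nonneg _)
      linarith
  -- assembling
  have hRsub : Rplus u ⊆ Hplus := fun p hp => hp.1
  have hCB_int : IntegrableOn (fun p : Pt => p.2 ^ a * normH2 u p * (pdy φ p) ^ 2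
      + p.2 ^ a * ((pdy (Xd u) p ^ 2 + pdy (Yd u) p ^ 2) * φ p ^ 2
        + 2 * (Xd u p * pdy (Xd u) p + Yd u p * pdy (Yd u) p) * φ p * pdy φ p))
      Hplus volume := hC_int.add hB_int
  have h1 : (∫ p in Rplus u, p.2 ^ a * (pdy (fun q => nH u q * φ q) p) ^ 2)
      ≤ ∫ p in Rplus u, (p.2 ^ a * normH2 u p * (pdy φ p) ^ 2
        + p.2 ^ a * ((pdy (Xd u) p ^ 2 + pdy (Yd u) p ^ 2) * φ p ^ 2
          + 2 * (Xd u p * pdy (Xd u) p + Yd u p * pdy (Yd u) p) * φ p * pdy φ p)) := by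
    have hRm : MeasurableSet (Rplus u) := by
      have hNc : ContinuousOn (normH2 u) Hplus := by
        unfold normH2; exact (hXc.pow 2).add (hYc.pow 2)
      have : Rplus u = Hplus ∩ normH2 u ⁻¹' ({0}ᶜ) := by
        ext p; simp [Rplus, Hplus, Set.mem_setOf_eq]
      rw [this]
      exact (hNc.isOpen_inter_preimage VTE.isOpen_Hplus isOpen_compl_singleton).measurableSet
    refine integral_mono_of_nonneg ?_ (hCB_int.mono_set hRsub) ?_
    · refine (ae_restrict_iff' hRm).2 (Filter.Eventually.of_forall ?_)
      intro p hp
      exact mul_nonneg (hya0 p hp.1) (sq_nonneg _)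
    · refine (ae_restrict_iff' hRm).2 (Filter.Eventually.of_forall ?_)
      intro p hp
      exact hAle p hp
  have h2 : (∫ p in Rplus u, (p.2 ^ a * normH2 u p * (pdy φ p) ^ 2
        + p.2 ^ a * ((pdy (Xd u) p ^ 2 + pdy (Yd u) p ^ 2) * φ p ^ 2
          + 2 * (Xd u p * pdy (Xd u) p + Yd u p * pdy (Yd u) p) * φ p * pdy φ p)))
      ≤ ∫ p in Hplus, (p.2 ^ a * normH2 u p * (pdy φ p) ^ 2
        + p.2 ^ a * ((pdy (Xd u) p ^ 2 + pdy (Yd u) p ^ 2) * φ p ^ 2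
          + 2 * (Xd u p * pdy (Xd u) p + Yd u p * pdy (Yd u) p) * φ p * pdy φ p)) := by
    refine setIntegral_mono_set hCB_int ?_ (HasSubset.Subset.eventuallyLE hRsub)
    refine (ae_restrict_iff' hHm).2 (Filter.Eventually.of_forall ?_)
    exact hGpos
  have h3 : (∫ p in Hplus, (p.2 ^ a * normH2 u p * (pdy φ p) ^ 2
        + p.2 ^ a * ((pdy (Xd u) p ^ 2 + pdy (Yd u) p ^ 2) * φ p ^ 2
          + 2 * (Xd u p * pdy (Xd u) p + Yd u p * pdy (Yd u) p) * φ p * pdy φ p)))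
      = (∫ p in Hplus, p.2 ^ a * normH2 u p * (pdy φ p) ^ 2)
        + ∫ p in Hplus, p.2 ^ a * ((pdy (Xd u) p ^ 2 + pdy (Yd u) p ^ 2) * φ p ^ 2
          + 2 * (Xd u p * pdy (Xd u) p + Yd u p * pdy (Yd u) p) * φ p * pdy φ p) :=
    integral_add hC_int hB_int
  have h4 : (∫ p in Hplus, p.2 ^ a *
      (pdy (Xd u) p * pdy (fun q => Xd u q * φ q ^ 2) p
        + pdy (Yd u) p * pdy (fun q => Yd u q * φ q ^ 2) p))
      = ∫ p in Hplus, p.2 ^ a * ((pdy (Xd u) p ^ 2 + pdy (Yd u) p ^ 2) * φ p ^ 2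
        + 2 * (Xd u p * pdy (Xd u) p + Yd u p * pdy (Yd u) p) * φ p * pdy φ p) :=
    setIntegral_congr_fun hHm hBeq
  linarith
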